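/- Let 1 ≤ k ≤ m and let A ∈ U_k. Then for every x ∈ S^{m-1}, the sum of the k smallest entries of x is at most ⟨Ax, x⟩, and ⟨Ax, x⟩ is at most the sum of the k largest entries of x. -/
import Mathlib


/-- A (row-)stochastic matrix. -/
def IsStochastic (m : ℕ) (T : Matrix (Fin m) (Fin m) ℝ) : Prop :=
  (∀ i j, 0 ≤ T i j) ∧ ∀ i, ∑ j, T i j = 1

/-- `T_k`: matrices with entries in `[0,1]` and all row sums equal to `k`. -/
def Tset (m k : ℕ) : Set (Matrix (Fin m) (Fin m) ℝ) :=
  {T | (∀ i j, 0 ≤ T i j ∧ T i j ≤ 1) ∧ ∀ i, ∑ j, T i j = (k : ℝ)}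

/-- `U_k`: the symmetrization of `T_k`. -/
def Uset (m k : ℕ) : Set (Matrix (Fin m) (Fin m) ℝ) :=
  {A | ∃ T ∈ Tset m k, A = (1 / 2 : ℝ) • (T + T.transpose)}

/-- The all-ones matrix `E`. -/
def Ematrix (m : ℕ) : Matrix (Fin m) (Fin m) ℝ := Matrix.of fun _ _ => 1

/-- Sum of the `k` largest entries of `x`, as a supremum over `k`-element subsets. -/
noncomputable def maxSum (m : ℕ) (x : Fin m → ℝ) (k : ℕ) : ℝ :=
  sSup {r : ℝ | ∃ s : Finset (Fin m), s.card = k ∧ r = ∑ i ∈ s, x i}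

/-- Sum of the `k` smallest entries of `x`, as an infimum over `k`-element subsets. -/
noncomputable def minSum (m : ℕ) (x : Fin m → ℝ) (k : ℕ) : ℝ :=
  sInf {r : ℝ | ∃ s : Finset (Fin m), s.card = k ∧ r = ∑ i ∈ s, x i}

/-- Existence of a "top-k" set of indices for `x`. -/
lemma exists_topk {m : ℕ} (k : ℕ) (hkm : k ≤ m) (x : Fin m → ℝ) :
    ∃ s : Finset (Fin m), s.card = k ∧ ∀ i ∈ s, ∀ j ∉ s, x j ≤ x i := by
  induction k with
  | zero => exact ⟨∅, rfl, by simp⟩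
  | succ n ih =>
    obtain ⟨s, hcard, hs⟩ := ih (Nat.le_of_succ_le hkm)
    have hcompl : sᶜ.Nonempty := by
      rw [← Finset.card_pos, Finset.card_compl, hcard, Fintype.card_fin]
      omega
    obtain ⟨j0, hj0, hmax⟩ := sᶜ.exists_max_image x hcompl
    have hj0s : j0 ∉ s := Finset.mem_compl.mp hj0
    refine ⟨insert j0 s, by rw [Finset.card_insert_of_notMem hj0s, hcard], ?_⟩
    intro i hi j hj
    have hjs : j ∉ s := fun h => hj (Finset.mem_insert_of_mem h)
    rcases Finset.mem_insert.mp hi with rfl | hi'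
    · exact hmax j (Finset.mem_compl.mpr hjs)
    · exact hs i hi' j hjs

/-- Key inequality: if `t` has entries in `[0,1]` summing to `k`, and `s` is a top-`k` set,
then `∑ t_j x_j ≤ ∑_{j∈s} x_j`. -/
lemma sum_le_topk {m k : ℕ} (x t : Fin m → ℝ) (ht0 : ∀ j, 0 ≤ t j) (ht1 : ∀ j, t j ≤ 1)
    (htk : ∑ j, t j = (k : ℝ)) (s : Finset (Fin m)) (hcard : s.card = k) (hk1 : 1 ≤ k)
    (hs : ∀ i ∈ s, ∀ j ∉ s, x j ≤ x i) :
    ∑ j, t j * x j ≤ ∑ j ∈ s, x j := by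
  have hne : s.Nonempty := Finset.card_pos.mp (by omega)
  obtain ⟨i0, hi0, hmin⟩ := s.exists_min_image x hne
  set c := x i0 with hc
  have hcxs : ∀ j ∈ s, c ≤ x j := hmin
  have hcxc : ∀ j, j ∉ s → x j ≤ c := fun j hj => hs i0 hi0 j hj
  have hsplit : ∑ j, t j * x j = ∑ j ∈ s, t j * x j + ∑ j ∈ sᶜ, t j * x j :=
    (Finset.sum_add_sum_compl s _).symm
  have h1 : ∑ j ∈ sᶜ, t j * x j ≤ ∑ j ∈ sᶜ, t j * c := by
    apply Finset.sum_le_sum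
    intro j hj
    exact mul_le_mul_of_nonneg_left (hcxc j (Finset.mem_compl.mp hj)) (ht0 j)
  have h2 : ∑ j ∈ sᶜ, t j * c = ∑ j ∈ s, (c - t j * c) := by
    rw [Finset.sum_sub_distrib, ← Finset.sum_mul, ← Finset.sum_mul, Finset.sum_const, hcard]
    have : ∑ j ∈ sᶜ, t j = (k : ℝ) - ∑ j ∈ s, t j := by
      have := Finset.sum_add_sum_compl s t
      linarith
    rw [this]
    ring
  have h3 : ∑ j ∈ s, t j * x j + ∑ j ∈ s, (c - t j * c) ≤ ∑ j ∈ s, x j := by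
    rw [← Finset.sum_add_distrib]
    apply Finset.sum_le_sum
    intro j hj
    have := hcxs j hj
    have := ht1 j
    nlinarith
  linarith

lemma finite_subsums {m k : ℕ} (x : Fin m → ℝ) :
    {r : ℝ | ∃ s : Finset (Fin m), s.card = k ∧ r = ∑ i ∈ s, x i}.Finite := by
  apply Set.Finite.subset ((Set.finite_univ (α := Finset (Fin m))).image
    (fun s => ∑ i ∈ s, x i))
  rintro r ⟨s, _, rfl⟩
  exact ⟨s, trivial, rfl⟩

/-- Each row average `∑_j t_j x_j` lies between `minSum` and `maxSum`. -/
lemma row_bounds {m k : ℕ} (hk1 : 1 ≤ k) (hkm : k ≤ m) (x t : Fin m → ℝ)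
    (ht0 : ∀ j, 0 ≤ t j) (ht1 : ∀ j, t j ≤ 1) (htk : ∑ j, t j = (k : ℝ)) :
    minSum m x k ≤ ∑ j, t j * x j ∧ ∑ j, t j * x j ≤ maxSum m x k := by
  constructor
  · obtain ⟨s, hcard, hs⟩ := exists_topk k hkm (fun i => -x i)
    have hle : ∑ j ∈ s, x j ≤ ∑ j, t j * x j := by
      have h := sum_le_topk (fun i => -x i) t ht0 ht1 htk s hcard hk1 hs
      simp only [mul_neg, Finset.sum_neg_distrib] at h
      linarith
    calc minSum m x k ≤ ∑ j ∈ s, x j :=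
          csInf_le (finite_subsums x).bddBelow ⟨s, hcard, rfl⟩
      _ ≤ _ := hle
  · obtain ⟨s, hcard, hs⟩ := exists_topk k hkm x
    calc ∑ j, t j * x j ≤ ∑ j ∈ s, x j := sum_le_topk x t ht0 ht1 htk s hcard hk1 hs
      _ ≤ maxSum m x k := le_csSup (finite_subsums x).bddAbove ⟨s, hcard, rfl⟩

/-- For `A ∈ U_k`, the quadratic form `(Ax, x)` on the simplex lies between the sum of
the `k` smallest and the sum of the `k` largest entries of `x`. -/
theorem Uk_quadratic_form_bounds (m k : ℕ) (hk1 : 1 ≤ k) (hkm : k ≤ m)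
    (A : Matrix (Fin m) (Fin m) ℝ) (hA : A ∈ Uset m k) :
    ∀ x ∈ stdSimplex ℝ (Fin m),
      minSum m x k ≤ ∑ i, ∑ j, A i j * x i * x j ∧
        ∑ i, ∑ j, A i j * x i * x j ≤ maxSum m x k := by
  obtain ⟨T, ⟨hT01, hTrow⟩, hAeq⟩ := hA
  intro x hx
  have hx0 : ∀ i, 0 ≤ x i := hx.1
  have hx1 : ∑ i, x i = 1 := hx.2
  have hAij : ∀ i j, A i j = 1 / 2 * (T i j + T j i) := by
    intro i j
    rw [hAeq]
    simp [Matrix.smul_apply, Matrix.add_apply, Matrix.transpose_apply]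
  have hswap : ∑ i, ∑ j, T j i * x i * x j = ∑ i, ∑ j, T i j * x i * x j := by
    rw [Finset.sum_comm]
    refine Finset.sum_congr rfl fun i _ => Finset.sum_congr rfl fun j _ => by ring
  have hQ : ∑ i, ∑ j, A i j * x i * x j = ∑ i, x i * ∑ j, T i j * x j := by
    have e1 : ∑ i, ∑ j, A i j * x i * x j
        = ∑ i, ∑ j, (1 / 2 * (T i j * x i * x j) + 1 / 2 * (T j i * x i * x j)) := by
      refine Finset.sum_congr rfl fun i _ => Finset.sum_congr rfl fun j _ => by
        rw [hAij i j]; ring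
    rw [e1]
    simp only [Finset.sum_add_distrib, ← Finset.mul_sum]
    rw [hswap]
    rw [show ∀ a : ℝ, 1/2 * a + 1/2 * a = a from fun a => by ring]
    refine Finset.sum_congr rfl fun i _ => ?_
    rw [Finset.mul_sum]
    exact Finset.sum_congr rfl fun j _ => by ring
  rw [hQ]
  have hrow : ∀ i, minSum m x k ≤ ∑ j, T i j * x j ∧ ∑ j, T i j * x j ≤ maxSum m x k :=
    fun i => row_bounds hk1 hkm x (T i) (fun j => (hT01 i j).1) (fun j => (hT01 i j).2)
      (hTrow i)
  constructor
  · calc minSum m x k = ∑ i, x i * minSum m x k := by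
          rw [← Finset.sum_mul, hx1, one_mul]
      _ ≤ ∑ i, x i * ∑ j, T i j * x j :=
          Finset.sum_le_sum fun i _ => mul_le_mul_of_nonneg_left (hrow i).1 (hx0 i)
  · calc ∑ i, x i * ∑ j, T i j * x j ≤ ∑ i, x i * maxSum m x k :=
          Finset.sum_le_sum fun i _ => mul_le_mul_of_nonneg_left (hrow i).2 (hx0 i)
      _ = maxSum m x k := by rw [← Finset.sum_mul, hx1, one_mul]
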